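/- Suppose E[κ_X(X,X)] < ∞, E[κ_Y(Y,Y)] < ∞, E[κ_Z(Z,Z)] < ∞, and that for every g ∈ G_X the function z ↦ E[g(X)|Z=z] has a version in G_Z, and for every g ∈ G_Y the function z ↦ E[g(Y)|Z=z] has a version in G_Z. Then Σ_{XY|Z} = E[(κ_X(·,X) − E[κ_X(·,X)|Z]) ⊗ (κ_Y(·,Y) − E[κ_Y(·,Y)|Z])], i.e., the representation of the conditional covariance operator also holds with the uncentered kernel sections in place of the centered ones. -/

import Mathlib

/-!
Test the operator identity against `g ∈ G_X` and `v ∈ G_Y`: with `A = g(X)` and `B = v(Y)`,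
`⟪g, Σ_XY v⟫ = Cov(A, B)`. The hypotheses give `d, e ∈ G_Z` with `E[A|Z] = d(Z)` and
`E[B|Z] = e(Z)`, hence `Σ_ZX g = Σ_ZZ d` and `Σ_ZY v = Σ_ZZ e`; the Penrose identity
`Σ_ZZ Σ_ZZ^† Σ_ZZ = Σ_ZZ` then turns `⟪g, Σ_XZ Σ_ZZ^† Σ_ZY v⟫` into
`⟪d, Σ_ZZ e⟫ = Cov(E[A|Z], E[B|Z])`. What remains is the law of total covariance
`Cov(A, B) - Cov(E[A|Z], E[B|Z]) = E[(A - E[A|Z]) (B - E[B|Z])]`.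
-/

open MeasureTheory ProbabilityTheory Filter
open scoped RealInnerProductSpace

noncomputable section

/-- The rank-one operator `u ⊗ v : H₂ → H₁`, `w ↦ ⟪v, w⟫ u`. -/
def rankOne {H1 H2 : Type*} [NormedAddCommGroup H1] [InnerProductSpace ℝ H1]
    [NormedAddCommGroup H2] [InnerProductSpace ℝ H2] (u : H1) (v : H2) : H2 →L[ℝ] H1 :=
  (innerSL ℝ v).smulRight u

variable {Ω : Type*} [MeasurableSpace Ω]

/-- The mean element `μ = E[k(·,X)] ∈ G` (Bochner integral). -/
def meanElem {H G : Type*} [NormedAddCommGroup G] [InnerProductSpace ℝ G] [CompleteSpace G]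
    (P : Measure Ω) (k : H → G) (X : Ω → H) : G :=
  ∫ ω, k (X ω) ∂P

/-- The centered kernel section `κ̃(·,x) = κ(·,x) − μ`. -/
def ctrKer {H G : Type*} [NormedAddCommGroup G] [InnerProductSpace ℝ G] [CompleteSpace G]
    (P : Measure Ω) (k : H → G) (X : Ω → H) (x : H) : G :=
  k x - meanElem P k X

/-- The (cross-)covariance operator `Σ_{XZ} = E[κ̃_X(·,X) ⊗ κ̃_Z(·,Z)] : G₂ → G₁`. -/
def crossCov {H1 G1 H2 G2 : Type*}
    [NormedAddCommGroup G1] [InnerProductSpace ℝ G1] [CompleteSpace G1]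
    [NormedAddCommGroup G2] [InnerProductSpace ℝ G2] [CompleteSpace G2]
    (P : Measure Ω) (k1 : H1 → G1) (X : Ω → H1) (k2 : H2 → G2) (Z : Ω → H2) :
    G2 →L[ℝ] G1 :=
  ∫ ω, rankOne (ctrKer P k1 X (X ω)) (ctrKer P k2 Z (Z ω)) ∂P

/-- The Penrose axioms characterizing the Moore–Penrose inverse `dag` of a
self-adjoint operator `C`. -/
def IsMoorePenroseInv {G : Type*} [NormedAddCommGroup G] [InnerProductSpace ℝ G]
    (C : G →L[ℝ] G) (dag : G →ₗ[ℝ] G) : Prop :=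
  (∀ f, C (dag (C f)) = C f) ∧ (∀ f, dag (C (dag f)) = dag f) ∧
    (∀ f g, ⟪C (dag f), g⟫ = ⟪f, C (dag g)⟫) ∧
    (∀ f g, ⟪dag (C f), g⟫ = ⟪f, dag (C g)⟫)

section LawOfTotalCovariance

variable {α : Type*} {m m₀ : MeasurableSpace α} {μ : Measure α}

lemma covariance_congr_ae {f f' g g' : α → ℝ} (hf : f =ᵐ[μ] f') (hg : g =ᵐ[μ] g') :
    cov[f, g; μ] = cov[f', g'; μ] := by
  unfold covariance
  rw [integral_congr_ae hf, integral_congr_ae hg]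
  refine integral_congr_ae ?_
  filter_upwards [hf, hg] with ω hfω hgω
  rw [hfω, hgω]

lemma integral_mul_condExp_of_stronglyMeasurable [IsFiniteMeasure μ] (hm : m ≤ m₀) {c f : α → ℝ}
    (hc : StronglyMeasurable[m] c) (hc₂ : MemLp c 2 μ) (hf₂ : MemLp f 2 μ) :
    ∫ ω, c ω * f ω ∂μ = ∫ ω, c ω * μ[f | m] ω ∂μ := by
  rw [← integral_condExp hm]
  exact integral_congr_ae
    (condExp_mul_of_stronglyMeasurable_left hc (hc₂.integrable_mul hf₂) (hf₂.integrable one_le_two))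

lemma covariance_condExp_right [IsProbabilityMeasure μ] (hm : m ≤ m₀) {c f : α → ℝ}
    (hc : StronglyMeasurable[m] c) (hc₂ : MemLp c 2 μ) (hf₂ : MemLp f 2 μ) :
    cov[c, f; μ] = cov[c, μ[f | m]; μ] := by
  rw [covariance_eq_sub hc₂ hf₂, covariance_eq_sub hc₂ (hf₂.condExp one_le_two),
    integral_condExp hm]
  simp only [Pi.mul_apply]
  rw [integral_mul_condExp_of_stronglyMeasurable hm hc hc₂ hf₂]

lemma covariance_sub_covariance_condExp [IsProbabilityMeasure μ] (hm : m ≤ m₀) {f g : α → ℝ}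
    (hf₂ : MemLp f 2 μ) (hg₂ : MemLp g 2 μ) :
    cov[f, g; μ] - cov[μ[f | m], μ[g | m]; μ]
      = ∫ ω, (f ω - μ[f | m] ω) * (g ω - μ[g | m] ω) ∂μ := by
  have hF₂ : MemLp (μ[f | m]) 2 μ := hf₂.condExp one_le_two
  have hG₂ : MemLp (μ[g | m]) 2 μ := hg₂.condExp one_le_two
  have hF : cov[μ[f | m], g; μ] = cov[μ[f | m], μ[g | m]; μ] :=
    covariance_condExp_right hm stronglyMeasurable_condExp hF₂ hg₂
  have hG : cov[f, μ[g | m]; μ] = cov[μ[f | m], μ[g | m]; μ] := by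
    rw [covariance_comm, covariance_condExp_right hm stronglyMeasurable_condExp hG₂ hf₂,
      covariance_comm]
  have hcentered : ∀ {h : α → ℝ}, MemLp h 2 μ → ∫ ω, h ω - μ[h | m] ω ∂μ = 0 := fun hh => by
    rw [integral_sub (hh.integrable one_le_two) integrable_condExp, integral_condExp hm, sub_self]
  have hcov : ∫ ω, (f ω - μ[f | m] ω) * (g ω - μ[g | m] ω) ∂μ
      = cov[fun ω => f ω - μ[f | m] ω, fun ω => g ω - μ[g | m] ω; μ] := by
    rw [covariance, hcentered hf₂, hcentered hg₂]
    simp only [sub_zero]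
  rw [hcov, covariance_fun_sub_fun_sub hf₂ hF₂ hg₂ hG₂, hF, hG]
  ring

end LawOfTotalCovariance

section RankOne

variable {G₁ G₂ : Type*} [NormedAddCommGroup G₁] [InnerProductSpace ℝ G₁]
  [NormedAddCommGroup G₂] [InnerProductSpace ℝ G₂]

lemma rankOne_apply (u : G₁) (v w : G₂) : rankOne u v w = ⟪v, w⟫ • u := rfl

lemma norm_rankOne (u : G₁) (v : G₂) : ‖rankOne u v‖ = ‖v‖ * ‖u‖ := by
  rw [rankOne, ContinuousLinearMap.norm_smulRight_apply, innerSL_apply_norm]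

lemma continuous_rankOne : Continuous (fun p : G₁ × G₂ => rankOne p.1 p.2) :=
  (ContinuousLinearMap.smulRightL ℝ G₂ G₁).continuous₂.comp
    (((innerSL ℝ).continuous.comp continuous_snd).prodMk continuous_fst)

variable {α : Type*} [MeasurableSpace α] {μ : Measure α}

lemma integrable_rankOne {u : α → G₁} {w : α → G₂} (hu : MemLp u 2 μ) (hw : MemLp w 2 μ) :
    Integrable (fun ω => rankOne (u ω) (w ω)) μ := by
  refine Integrable.mono' (hw.norm.integrable_mul hu.norm)
    (continuous_rankOne.comp_aestronglyMeasurable (hu.1.prodMk hw.1))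
    (Eventually.of_forall fun ω => (norm_rankOne _ _).le)

lemma inner_integral_rankOne_apply [CompleteSpace G₁] {u : α → G₁} {w : α → G₂}
    (hu : MemLp u 2 μ) (hw : MemLp w 2 μ) (g : G₁) (v : G₂) :
    ⟪g, (∫ ω, rankOne (u ω) (w ω) ∂μ) v⟫ = ∫ ω, ⟪u ω, g⟫ * ⟪w ω, v⟫ ∂μ := by
  have hint := integrable_rankOne hu hw
  rw [ContinuousLinearMap.integral_apply hint,
    ← integral_inner (hint.apply_continuousLinearMap v) g]
  congr 1 with ω
  rw [rankOne_apply, real_inner_smul_right, real_inner_comm g, mul_comm]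

end RankOne

section CondExpInner

variable {α : Type*} {m m₀ : MeasurableSpace α} {μ : Measure α}
  {G : Type*} [NormedAddCommGroup G] [InnerProductSpace ℝ G]

lemma memLp_two_of_integrable_inner_self {f : α → G} (hf : AEStronglyMeasurable f μ)
    (hff : Integrable (fun ω => ⟪f ω, f ω⟫) μ) : MemLp f 2 μ := by
  rw [memLp_two_iff_integrable_sq_norm hf]
  simpa only [← real_inner_self_eq_norm_sq] using hff

lemma inner_condExp_ae_eq_condExp_inner [CompleteSpace G] {f : α → G} (hf : Integrable f μ)
    (g : G) : (fun ω => ⟪μ[f | m] ω, g⟫) =ᵐ[μ] μ[fun ω => ⟪f ω, g⟫ | m] := by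
  simpa only [Function.comp_def, innerSL_apply_apply, real_inner_comm g] using
    (innerSL ℝ g).comp_condExp_comm (m := m) hf

end CondExpInner

section CrossCov

variable {α : Type*} {m m₀ : MeasurableSpace α} {P : Measure α}
  {H₁ H₂ G₁ G₂ : Type*} [NormedAddCommGroup G₁] [InnerProductSpace ℝ G₁] [CompleteSpace G₁]
  [NormedAddCommGroup G₂] [InnerProductSpace ℝ G₂] [CompleteSpace G₂]
  {k₁ : H₁ → G₁} {X₁ : α → H₁} {k₂ : H₂ → G₂} {X₂ : α → H₂}

lemma inner_ctrKer (hk : Integrable (fun ω => k₁ (X₁ ω)) P) (x : H₁) (g : G₁) :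
    ⟪ctrKer P k₁ X₁ x, g⟫ = ⟪k₁ x, g⟫ - ∫ ω, ⟪k₁ (X₁ ω), g⟫ ∂P := by
  rw [ctrKer, meanElem, inner_sub_left]
  congr 1
  rw [real_inner_comm, ← integral_inner hk g]
  simp only [real_inner_comm g]

lemma inner_crossCov_apply [IsFiniteMeasure P] (h₁ : MemLp (fun ω => k₁ (X₁ ω)) 2 P)
    (h₂ : MemLp (fun ω => k₂ (X₂ ω)) 2 P) (g : G₁) (v : G₂) :
    ⟪g, crossCov P k₁ X₁ k₂ X₂ v⟫
      = cov[fun ω => ⟪k₁ (X₁ ω), g⟫, fun ω => ⟪k₂ (X₂ ω), v⟫; P] := by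
  have hc₁ : MemLp (fun ω => ctrKer P k₁ X₁ (X₁ ω)) 2 P := h₁.sub (memLp_const _)
  have hc₂ : MemLp (fun ω => ctrKer P k₂ X₂ (X₂ ω)) 2 P := h₂.sub (memLp_const _)
  rw [crossCov, inner_integral_rankOne_apply hc₁ hc₂, covariance]
  simp only [inner_ctrKer (h₁.integrable one_le_two), inner_ctrKer (h₂.integrable one_le_two)]

lemma adjoint_crossCov [IsFiniteMeasure P] (h₁ : MemLp (fun ω => k₁ (X₁ ω)) 2 P)
    (h₂ : MemLp (fun ω => k₂ (X₂ ω)) 2 P) :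
    ContinuousLinearMap.adjoint (crossCov P k₁ X₁ k₂ X₂) = crossCov P k₂ X₂ k₁ X₁ := by
  refine ((ContinuousLinearMap.eq_adjoint_iff _ _).mpr fun g v => ?_).symm
  rw [real_inner_comm, inner_crossCov_apply h₂ h₁, inner_crossCov_apply h₁ h₂, covariance_comm]

lemma crossCov_apply_eq_of_condExp_eq [IsProbabilityMeasure P] (hm : m ≤ m₀)
    (hk₂ : StronglyMeasurable[m] (fun ω => k₂ (X₂ ω)))
    (h₁ : MemLp (fun ω => k₁ (X₁ ω)) 2 P) (h₂ : MemLp (fun ω => k₂ (X₂ ω)) 2 P) {g : G₁} {d : G₂}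
    (hd : (fun ω => ⟪k₂ (X₂ ω), d⟫) =ᵐ[P] P[fun ω => ⟪k₁ (X₁ ω), g⟫ | m]) :
    crossCov P k₂ X₂ k₁ X₁ g = crossCov P k₂ X₂ k₂ X₂ d := by
  refine ext_inner_left ℝ fun w => ?_
  rw [inner_crossCov_apply h₂ h₁, inner_crossCov_apply h₂ h₂,
    covariance_condExp_right hm (hk₂.inner stronglyMeasurable_const) (h₂.inner_const w)
      (h₁.inner_const g)]
  exact covariance_congr_ae .rfl hd.symm

lemma inner_integral_rankOne_sub_condExp_apply [IsProbabilityMeasure P] (hm : m ≤ m₀)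
    {u : α → G₁} {w : α → G₂} (hu : MemLp u 2 P) (hw : MemLp w 2 P) (g : G₁) (v : G₂) :
    ⟪g, (∫ ω, rankOne (u ω - P[u | m] ω) (w ω - P[w | m] ω) ∂P) v⟫
      = cov[fun ω => ⟪u ω, g⟫, fun ω => ⟪w ω, v⟫; P]
        - cov[P[fun ω => ⟪u ω, g⟫ | m], P[fun ω => ⟪w ω, v⟫ | m]; P] := by
  have hu' : MemLp (fun ω => u ω - P[u | m] ω) 2 P := hu.sub (hu.condExp one_le_two)
  have hw' : MemLp (fun ω => w ω - P[w | m] ω) 2 P := hw.sub (hw.condExp one_le_two)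
  rw [inner_integral_rankOne_apply hu' hw',
    covariance_sub_covariance_condExp hm (hu.inner_const g) (hw.inner_const v)]
  refine integral_congr_ae ?_
  filter_upwards [inner_condExp_ae_eq_condExp_inner (m := m) (hu.integrable one_le_two) g,
    inner_condExp_ae_eq_condExp_inner (m := m) (hw.integrable one_le_two) v] with ω hg hv
  rw [inner_sub_left, inner_sub_left, hg, hv]

end CrossCov

theorem statement4_general
    (P : Measure Ω) [IsProbabilityMeasure P]
    {HX HY HZ GX GY GZ : Type*}
    [MeasurableSpace HX] [MeasurableSpace HY] [MeasurableSpace HZ]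
    [NormedAddCommGroup GX] [InnerProductSpace ℝ GX] [CompleteSpace GX]
    [SecondCountableTopology GX] [MeasurableSpace GX] [BorelSpace GX]
    [NormedAddCommGroup GY] [InnerProductSpace ℝ GY] [CompleteSpace GY]
    [SecondCountableTopology GY] [MeasurableSpace GY] [BorelSpace GY]
    [NormedAddCommGroup GZ] [InnerProductSpace ℝ GZ] [CompleteSpace GZ]
    [SecondCountableTopology GZ] [MeasurableSpace GZ] [BorelSpace GZ]
    (X : Ω → HX) (Y : Ω → HY) (Z : Ω → HZ)
    (hX : Measurable X) (hY : Measurable Y) (hZ : Measurable Z)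
    (kX : HX → GX) (kY : HY → GY) (kZ : HZ → GZ)
    (hkX : Measurable kX) (hkY : Measurable kY) (hkZ : Measurable kZ)
    (hmX : Integrable (fun ω => ⟪kX (X ω), kX (X ω)⟫) P)
    (hmY : Integrable (fun ω => ⟪kY (Y ω), kY (Y ω)⟫) P)
    (hmZ : Integrable (fun ω => ⟪kZ (Z ω), kZ (Z ω)⟫) P)
    (hCEX : ∀ g : GX, ∃ h : GZ,
      (fun ω => ⟪kZ (Z ω), h⟫) =ᵐ[P]
        condExp (MeasurableSpace.comap Z inferInstance) P (fun ω => ⟪kX (X ω), g⟫))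
    (hCEY : ∀ g : GY, ∃ h : GZ,
      (fun ω => ⟪kZ (Z ω), h⟫) =ᵐ[P]
        condExp (MeasurableSpace.comap Z inferInstance) P (fun ω => ⟪kY (Y ω), g⟫))
    (dag : GZ →ₗ[ℝ] GZ)
    (hdag : IsMoorePenroseInv (crossCov P kZ Z kZ Z) dag) :
    -- Σ_{XY|Z} = E[(κ_X(·,X) − E[κ_X(·,X)|Z]) ⊗ (κ_Y(·,Y) − E[κ_Y(·,Y)|Z])]
    ∀ v : GY,
      crossCov P kX X kY Y v - crossCov P kX X kZ Z (dag (crossCov P kZ Z kY Y v))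
        = (∫ ω, rankOne
            (kX (X ω) -
              condExp (MeasurableSpace.comap Z inferInstance) P (fun ω' => kX (X ω')) ω)
            (kY (Y ω) -
              condExp (MeasurableSpace.comap Z inferInstance) P (fun ω' => kY (Y ω')) ω)
            ∂P) v := by
  intro v
  have hm : MeasurableSpace.comap Z inferInstance ≤ ‹MeasurableSpace Ω› := hZ.comap_le
  have hX₂ : MemLp (fun ω => kX (X ω)) 2 P :=
    memLp_two_of_integrable_inner_self (hkX.comp hX).aestronglyMeasurable hmX
  have hY₂ : MemLp (fun ω => kY (Y ω)) 2 P :=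
    memLp_two_of_integrable_inner_self (hkY.comp hY).aestronglyMeasurable hmY
  have hZ₂ : MemLp (fun ω => kZ (Z ω)) 2 P :=
    memLp_two_of_integrable_inner_self (hkZ.comp hZ).aestronglyMeasurable hmZ
  have hkZZ : StronglyMeasurable[MeasurableSpace.comap Z inferInstance] (fun ω => kZ (Z ω)) :=
    (hkZ.comp (comap_measurable Z)).stronglyMeasurable
  obtain ⟨e, he⟩ := hCEY v
  refine ext_inner_left ℝ fun g => ?_
  obtain ⟨d, hd⟩ := hCEX g
  have hZX := crossCov_apply_eq_of_condExp_eq hm hkZZ hX₂ hZ₂ hd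
  have hZY := crossCov_apply_eq_of_condExp_eq hm hkZZ hY₂ hZ₂ he
  have hZZ := (crossCov P kZ Z kZ Z).adjoint_inner_left (dag (crossCov P kZ Z kZ Z e)) d
  rw [adjoint_crossCov hZ₂ hZ₂, hdag.1] at hZZ
  rw [inner_sub_right, inner_crossCov_apply hX₂ hY₂,
    ← (crossCov P kX X kZ Z).adjoint_inner_left, adjoint_crossCov hX₂ hZ₂, hZX, hZY, hZZ,
    inner_crossCov_apply hZ₂ hZ₂, covariance_congr_ae hd he,
    inner_integral_rankOne_sub_condExp_apply hm hX₂ hY₂]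

theorem statement4
    (P : Measure Ω) [IsProbabilityMeasure P]
    {HX HY HZ GX GY GZ : Type*}
    [NormedAddCommGroup HX] [InnerProductSpace ℝ HX] [CompleteSpace HX]
    [SecondCountableTopology HX] [MeasurableSpace HX] [BorelSpace HX]
    [NormedAddCommGroup HY] [InnerProductSpace ℝ HY] [CompleteSpace HY]
    [SecondCountableTopology HY] [MeasurableSpace HY] [BorelSpace HY]
    [NormedAddCommGroup HZ] [InnerProductSpace ℝ HZ] [CompleteSpace HZ]
    [SecondCountableTopology HZ] [MeasurableSpace HZ] [BorelSpace HZ]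
    [NormedAddCommGroup GX] [InnerProductSpace ℝ GX] [CompleteSpace GX]
    [SecondCountableTopology GX] [MeasurableSpace GX] [BorelSpace GX]
    [NormedAddCommGroup GY] [InnerProductSpace ℝ GY] [CompleteSpace GY]
    [SecondCountableTopology GY] [MeasurableSpace GY] [BorelSpace GY]
    [NormedAddCommGroup GZ] [InnerProductSpace ℝ GZ] [CompleteSpace GZ]
    [SecondCountableTopology GZ] [MeasurableSpace GZ] [BorelSpace GZ]
    (X : Ω → HX) (Y : Ω → HY) (Z : Ω → HZ)
    (hX : Measurable X) (hY : Measurable Y) (hZ : Measurable Z)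
    (kX : HX → GX) (kY : HY → GY) (kZ : HZ → GZ)
    (hkX : Measurable kX) (hkY : Measurable kY) (hkZ : Measurable kZ)
    (hdX : (Submodule.span ℝ (Set.range kX)).topologicalClosure = ⊤)
    (hdY : (Submodule.span ℝ (Set.range kY)).topologicalClosure = ⊤)
    (hdZ : (Submodule.span ℝ (Set.range kZ)).topologicalClosure = ⊤)
    (hmX : Integrable (fun ω => ⟪kX (X ω), kX (X ω)⟫) P)
    (hmY : Integrable (fun ω => ⟪kY (Y ω), kY (Y ω)⟫) P)
    (hmZ : Integrable (fun ω => ⟪kZ (Z ω), kZ (Z ω)⟫) P)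
    (hCEX : ∀ g : GX, ∃ h : GZ,
      (fun ω => ⟪kZ (Z ω), h⟫) =ᵐ[P]
        condExp (MeasurableSpace.comap Z inferInstance) P (fun ω => ⟪kX (X ω), g⟫))
    (hCEY : ∀ g : GY, ∃ h : GZ,
      (fun ω => ⟪kZ (Z ω), h⟫) =ᵐ[P]
        condExp (MeasurableSpace.comap Z inferInstance) P (fun ω => ⟪kY (Y ω), g⟫))
    (dag : GZ →ₗ[ℝ] GZ)
    (hdag : IsMoorePenroseInv (crossCov P kZ Z kZ Z) dag) :
    -- Σ_{XY|Z} = E[(κ_X(·,X) − E[κ_X(·,X)|Z]) ⊗ (κ_Y(·,Y) − E[κ_Y(·,Y)|Z])]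
    ∀ v : GY,
      crossCov P kX X kY Y v - crossCov P kX X kZ Z (dag (crossCov P kZ Z kY Y v))
        = (∫ ω, rankOne
            (kX (X ω) -
              condExp (MeasurableSpace.comap Z inferInstance) P (fun ω' => kX (X ω')) ω)
            (kY (Y ω) -
              condExp (MeasurableSpace.comap Z inferInstance) P (fun ω' => kY (Y ω')) ω)
            ∂P) v :=
  statement4_general P X Y Z hX hY hZ kX kY kZ hkX hkY hkZ hmX hmY hmZ hCEX hCEY dag hdag
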